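/- Let ω be a word over the two-letter alphabet {w, b} (modeled as a list) such that the number of occurrences of b in ω equals the number of occurrences of w plus 2. Then there are exactly two indices j ∈ {0, 1, …, |ω| − 1} such that the cyclic rotation of ω by j (the word ω₂ω₁, where ω = ω₁ω₂ and |ω₁| = j) can be written in the form p₁·b·p₂·b where p₁ and p₂ are correct bracketing words. -/

import Mathlib

/-- The two-letter alphabet: `w` is an opening bracket, `b` is a closing bracket. -/
inductive Letter : Type
  | w : Letter
  | b : Letter
deriving DecidableEq

/-- A word is a *correct bracketing word* if every prefix contains at least as many
letters `w` as letters `b`. -/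
def IsCorrect (p : List Letter) : Prop :=
  ∀ q : List Letter, q <+: p → q.count Letter.b ≤ q.count Letter.w

/-- Prefix sums: number of `b`'s minus number of `w`'s in the first `t` letters. -/
def Ssum (ω : List Letter) (t : ℕ) : ℤ :=
  ((ω.take t).count Letter.b : ℤ) - ((ω.take t).count Letter.w : ℤ)

lemma Ssum_zero (ω : List Letter) : Ssum ω 0 = 0 := by simp [Ssum]

lemma Ssum_step (ω : List Letter) (t : ℕ) :
    Ssum ω t - 1 ≤ Ssum ω (t + 1) ∧ Ssum ω (t + 1) ≤ Ssum ω t + 1 := by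
  unfold Ssum
  rw [List.take_succ]
  rcases hc : ω[t]? with _ | c
  · simp
  · cases c <;>
      simp [List.count_append, List.count_cons, List.count_nil] <;> omega

lemma Ssum_length (ω : List Letter) (h : ω.count Letter.b = ω.count Letter.w + 2) :
    Ssum ω ω.length = 2 := by
  unfold Ssum
  rw [List.take_length]
  omega

/-- Discrete intermediate value theorem for the prefix-sum walk. -/
lemma Ssum_ivt (ω : List Letter) (v : ℤ) :
    ∀ c a : ℕ, a ≤ c → Ssum ω a ≤ v → v ≤ Ssum ω c →
    ∃ t, a ≤ t ∧ t ≤ c ∧ Ssum ω t = v := by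
  intro c
  induction c with
  | zero =>
    intro a hac h1 h2
    have ha0 : a = 0 := Nat.le_zero.mp hac
    subst ha0
    exact ⟨0, le_refl _, le_refl _, le_antisymm h1 h2⟩
  | succ c ih =>
    intro a hac h1 h2
    rcases Nat.lt_or_ge a (c + 1) with hlt | hge
    · have hac' : a ≤ c := by omega
      rcases le_or_gt v (Ssum ω c) with hvc | hvc
      · obtain ⟨t, h3, h4, h5⟩ := ih a hac' h1 hvc
        exact ⟨t, h3, by omega, h5⟩
      · have h5 := Ssum_step ω c
        exact ⟨c + 1, by omega, le_refl _, by omega⟩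
    · have hta : a = c + 1 := by omega
      subst hta
      exact ⟨c + 1, le_refl _, le_refl _, le_antisymm h1 h2⟩

/-- Splitting a word whose prefixes never exceed excess `+1` and whose total excess
is exactly `+1` as `p₁ ++ [b] ++ p₂` with `p₁`, `p₂` correct. -/
lemma decomp_one (s : List Letter)
    (hpre : ∀ q : List Letter, q <+: s → q.count Letter.b ≤ q.count Letter.w + 1)
    (htot : s.count Letter.b = s.count Letter.w + 1) :
    ∃ p₁ p₂ : List Letter, IsCorrect p₁ ∧ IsCorrect p₂ ∧ s = p₁ ++ [Letter.b] ++ p₂ := by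
  classical
  have hex : ∃ t, (s.take t).count Letter.b = (s.take t).count Letter.w + 1 :=
    ⟨s.length, by rwa [List.take_length]⟩
  have hts : (s.take (Nat.find hex)).count Letter.b
      = (s.take (Nat.find hex)).count Letter.w + 1 := Nat.find_spec hex
  set t := Nat.find hex with htdef
  have ht0 : 0 < t := by
    rcases Nat.eq_zero_or_pos t with h0 | h0
    · rw [h0] at hts; simp at hts
    · exact h0
  have htlen : t ≤ s.length := by
    by_contra hl
    push_neg at hl
    have hmin' : t ≤ s.length :=
      Nat.find_min' hex (by rw [List.take_length]; exact htot)
    omega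
  have hgetlt : t - 1 < s.length := by omega
  have htake : s.take t = s.take (t - 1) ++ (s[t-1]?).toList := by
    conv_lhs => rw [show t = (t - 1) + 1 by omega]
    exact List.take_succ
  have hsome : s[t-1]? = some (s[t-1]) := List.getElem?_eq_getElem hgetlt
  have hmin : ¬ ((s.take (t-1)).count Letter.b = (s.take (t-1)).count Letter.w + 1) :=
    Nat.find_min hex (by omega)
  have hple : (s.take (t-1)).count Letter.b ≤ (s.take (t-1)).count Letter.w + 1 :=
    hpre _ (List.take_prefix _ _)
  have hb : s[t-1] = Letter.b := by
    rcases hc : s[t-1] with _ | _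
    · exfalso
      rw [htake, hsome, hc] at hts
      simp [List.count_append, List.count_cons] at hts
      omega
    · rfl
  have hts' : (s.take (t-1)).count Letter.b = (s.take (t-1)).count Letter.w := by
    rw [htake, hsome, hb] at hts
    simp [List.count_append, List.count_cons] at hts
    omega
  have htakeb : s.take t = s.take (t - 1) ++ [Letter.b] := by
    rw [htake, hsome, hb]; rfl
  refine ⟨s.take (t-1), s.drop t, ?_, ?_, ?_⟩
  · intro q hq
    have hlq : q.length ≤ t - 1 :=
      le_trans hq.length_le (le_trans (List.length_take).le (min_le_left _ _))
    have hqe : q = s.take q.length := by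
      have h1 := List.prefix_iff_eq_take.mp hq
      conv_lhs => rw [h1]
      rw [List.take_take, min_eq_left hlq]
    have hqs : q <+: s := hq.trans (List.take_prefix _ _)
    have h2 := hpre q hqs
    have h3 : ¬ ((s.take q.length).count Letter.b = (s.take q.length).count Letter.w + 1) :=
      Nat.find_min hex (by omega)
    rw [← hqe] at h3
    omega
  · intro q hq
    have hq' : s.take t ++ q <+: s := by
      conv_rhs => rw [← List.take_append_drop t s]
      exact (List.prefix_append_right_inj _).mpr hq
    have h2 := hpre _ hq'
    rw [List.count_append, List.count_append, hts] at h2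
    omega
  · conv_lhs => rw [← List.take_append_drop t s]
    rw [htakeb, List.append_assoc]

lemma decomp_iff (r : List Letter) (h : r.count Letter.b = r.count Letter.w + 2) :
    (∃ p₁ p₂ : List Letter, IsCorrect p₁ ∧ IsCorrect p₂ ∧
      r = p₁ ++ [Letter.b] ++ p₂ ++ [Letter.b]) ↔
    (∀ q : List Letter, q <+: r → q.length < r.length →
      q.count Letter.b ≤ q.count Letter.w + 1) := by
  constructor
  · rintro ⟨p₁, p₂, h₁, h₂, rfl⟩ q hq hlen
    simp only [List.append_assoc] at hq hlen
    have hc₁ : p₁.count Letter.b ≤ p₁.count Letter.w := h₁ p₁ (List.prefix_refl _)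
    by_cases hq1 : q.length ≤ p₁.length
    · have : q <+: p₁ := List.prefix_of_prefix_length_le hq (List.prefix_append _ _) hq1
      have := h₁ q this
      omega
    · push_neg at hq1
      obtain ⟨q', rfl⟩ :=
        List.prefix_of_prefix_length_le (List.prefix_append _ _) hq (le_of_lt hq1)
      have hq'' : q' <+: [Letter.b] ++ (p₂ ++ [Letter.b]) :=
        (List.prefix_append_right_inj _).mp hq
      rcases q' with _ | ⟨c, q''⟩
      · simp only [List.count_append, List.count_nil]
        omega
      · rw [show [Letter.b] ++ (p₂ ++ [Letter.b]) = Letter.b :: (p₂ ++ [Letter.b]) from rfl,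
          List.cons_prefix_cons] at hq''
        obtain ⟨rfl, hq''⟩ := hq''
        by_cases hq2 : q''.length ≤ p₂.length
        · have hqp : q'' <+: p₂ :=
            List.prefix_of_prefix_length_le hq'' (List.prefix_append _ _) hq2
          have := h₂ q'' hqp
          simp [List.count_append, List.count_cons]
          omega
        · push_neg at hq2
          obtain ⟨q''', rfl⟩ :=
            List.prefix_of_prefix_length_le (List.prefix_append _ _) hq'' (le_of_lt hq2)
          have hq4 : q''' <+: [Letter.b] := (List.prefix_append_right_inj _).mp hq''
          have hc₂ : p₂.count Letter.b ≤ p₂.count Letter.w := h₂ p₂ (List.prefix_refl _)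
          rcases q''' with _ | ⟨d, q5⟩
          · simp [List.count_append, List.count_cons]
            omega
          · rw [List.cons_prefix_cons] at hq4
            obtain ⟨rfl, hq5⟩ := hq4
            have hq50 : q5 = [] := List.prefix_nil.mp hq5
            subst hq50
            exfalso
            simp only [List.length_append, List.length_cons, List.length_nil] at hlen
            omega
  · intro hpre
    have hne : r ≠ [] := by
      intro h0; rw [h0] at h; simp at h
    have hpos : 0 < r.length := List.length_pos_iff.mpr hne
    have hsplit := List.dropLast_append_getLast hne
    have hd : r.dropLast.count Letter.b ≤ r.dropLast.count Letter.w + 1 :=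
      hpre r.dropLast (List.dropLast_prefix r)
        (by rw [List.length_dropLast]; omega)
    have hb : r.getLast hne = Letter.b := by
      rcases hg : r.getLast hne with _ | _
      · exfalso
        rw [← hsplit, hg] at h
        simp [List.count_append, List.count_cons] at h
        omega
      · rfl
    have hdl : r.dropLast.count Letter.b = r.dropLast.count Letter.w + 1 := by
      rw [← hsplit, hb] at h
      simp [List.count_append, List.count_cons] at h
      omega
    obtain ⟨p₁, p₂, h₁, h₂, hdec⟩ := decomp_one r.dropLast
      (fun q hq => hpre q (hq.trans (List.dropLast_prefix r))
        (lt_of_le_of_lt hq.length_le (by rw [List.length_dropLast]; omega)))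
      hdl
    refine ⟨p₁, p₂, h₁, h₂, ?_⟩
    conv_lhs => rw [← hsplit, hb, hdec]

lemma rotate_prefix_iff (ω : List Letter) (h : ω.count Letter.b = ω.count Letter.w + 2)
    {j : ℕ} (hj : j < ω.length) :
    (∀ q : List Letter, q <+: ω.rotate j → q.length < (ω.rotate j).length →
      q.count Letter.b ≤ q.count Letter.w + 1) ↔
    ((∀ a, a < j → Ssum ω a ≤ Ssum ω j - 1) ∧
      (∀ t, j ≤ t → t < ω.length → Ssum ω t ≤ Ssum ω j + 1)) := by
  set n := ω.length with hn
  have hrot : ω.rotate j = ω.drop j ++ ω.take j :=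
    List.rotate_eq_drop_append_take hj.le
  have hlen1 : (ω.drop j).length = n - j := List.length_drop
  -- take k of the rotation, first regime
  have fact1 : ∀ k, k ≤ n - j → (ω.rotate j).take k = (ω.drop j).take k := by
    intro k hk
    rw [hrot, List.take_append]
    have h0 : k - (ω.drop j).length = 0 := by omega
    rw [h0]
    simp
  -- second regime
  have fact2 : ∀ k, n - j ≤ k → k ≤ n →
      (ω.rotate j).take k = ω.drop j ++ ω.take (k - (n - j)) := by
    intro k hk1 hk2
    rw [hrot, List.take_append]
    rw [List.take_of_length_le (by omega), hlen1]
    congr 1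
    rw [List.take_take, min_eq_left (by omega)]
  -- count bookkeeping
  have ew1 : ∀ k, ω.take (j + k) = ω.take j ++ (ω.drop j).take k := fun k =>
    List.take_add
  have etot : ∀ x : Letter, (ω.take j).count x + (ω.drop j).count x = ω.count x := by
    intro x
    rw [← List.count_append, List.take_append_drop]
  constructor
  · intro hp
    constructor
    · intro a ha
      set k := n - j + a with hk
      have hkn : k < n := by omega
      have h1 := hp ((ω.rotate j).take k) (List.take_prefix _ _)
        (by rw [List.length_take, List.length_rotate]; omega)
      rw [fact2 k (by omega) (by omega)] at h1
      have hka : k - (n - j) = a := by omega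
      rw [hka, List.count_append, List.count_append] at h1
      have eb := etot Letter.b
      have ew := etot Letter.w
      unfold Ssum
      omega
    · intro t hjt htn
      set k := t - j with hk
      have h1 := hp ((ω.rotate j).take k) (List.take_prefix _ _)
        (by rw [List.length_take, List.length_rotate]; omega)
      rw [fact1 k (by omega)] at h1
      have e1 := ew1 k
      have hjk : j + k = t := by omega
      rw [hjk] at e1
      have eb : (ω.take t).count Letter.b
          = (ω.take j).count Letter.b + ((ω.drop j).take k).count Letter.b := by
        rw [e1, List.count_append]
      have ew : (ω.take t).count Letter.w
          = (ω.take j).count Letter.w + ((ω.drop j).take k).count Letter.w := by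
        rw [e1, List.count_append]
      unfold Ssum
      omega
  · rintro ⟨hA, hB⟩ q hq hlen
    have hqe : q = (ω.rotate j).take q.length := List.prefix_iff_eq_take.mp hq
    set k := q.length with hkdef
    rw [List.length_rotate] at hlen
    rw [hqe]
    by_cases hk : k ≤ n - j
    · rw [fact1 k hk]
      have e1 := ew1 k
      have eb : (ω.take (j + k)).count Letter.b
          = (ω.take j).count Letter.b + ((ω.drop j).take k).count Letter.b := by
        rw [e1, List.count_append]
      have ew : (ω.take (j + k)).count Letter.w
          = (ω.take j).count Letter.w + ((ω.drop j).take k).count Letter.w := by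
        rw [e1, List.count_append]
      have hS : Ssum ω (j + k) ≤ Ssum ω j + 1 := by
        rcases Nat.lt_or_ge (j + k) n with hlt | hge
        · exact hB (j + k) (by omega) hlt
        · have hjkn : j + k = n := by omega
          have hj0 : 0 < j := by omega
          have h0 := hA 0 hj0
          rw [Ssum_zero] at h0
          rw [hjkn, Ssum_length ω h]
          omega
      unfold Ssum at hS
      omega
    · push_neg at hk
      rw [fact2 k (by omega) (by omega)]
      set a := k - (n - j) with hadef
      have ha : a < j := by omega
      have hS : Ssum ω a ≤ Ssum ω j - 1 := hA a ha
      rw [List.count_append, List.count_append]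
      have eb := etot Letter.b
      have ew := etot Letter.w
      unfold Ssum at hS
      omega

/-- If a word `ω` over `{w, b}` has exactly two more `b`'s than `w`'s, then there are
exactly two indices `j ∈ {0, …, |ω| - 1}` such that the cyclic rotation of `ω` by `j`
has the form `p₁ · b · p₂ · b` with `p₁`, `p₂` correct bracketing words. -/
theorem two_free_rootings (ω : List Letter)
    (h : ω.count Letter.b = ω.count Letter.w + 2) :
    {j : ℕ | j < ω.length ∧ ∃ p₁ p₂ : List Letter, IsCorrect p₁ ∧ IsCorrect p₂ ∧
      ω.rotate j = p₁ ++ [Letter.b] ++ p₂ ++ [Letter.b]}.ncard = 2 := by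
  classical
  set n := ω.length with hn
  have hn2 : 2 ≤ n := by
    have : ω.count Letter.b ≤ ω.length := List.count_le_length
    omega
  obtain ⟨t₀, ht₀n', ht₀max'⟩ :=
    Finset.exists_max_image (Finset.range n) (Ssum ω) ⟨0, by simp; omega⟩
  rw [Finset.mem_range] at ht₀n'
  have ht₀max : ∀ t, t < n → Ssum ω t ≤ Ssum ω t₀ := fun t ht =>
    ht₀max' t (Finset.mem_range.mpr ht)
  set M := Ssum ω t₀ with hM
  have hM1 : 1 ≤ M := by
    have h1 := Ssum_step ω (n - 1)
    rw [Nat.sub_add_cancel (by omega)] at h1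
    have h2 : Ssum ω n = 2 := Ssum_length ω h
    have h3 := ht₀max (n - 1) (by omega)
    omega
  have hex1 : ∃ t, Ssum ω t = M ∧ t < n := ⟨t₀, rfl, ht₀n'⟩
  obtain ⟨hj₁M, hj₁n⟩ := Nat.find_spec hex1
  set j₁ := Nat.find hex1 with hj₁def
  have hex2 : ∃ t, Ssum ω t = M - 1 ∧ t < n := by
    obtain ⟨t, _, htj, hteq⟩ := Ssum_ivt ω (M - 1) j₁ 0 (Nat.zero_le j₁)
      (by rw [Ssum_zero]; omega) (by rw [hj₁M]; omega)
    exact ⟨t, hteq, lt_of_le_of_lt htj hj₁n⟩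
  obtain ⟨hj₂M, hj₂n⟩ := Nat.find_spec hex2
  set j₂ := Nat.find hex2 with hj₂def
  have hj₂₁ : j₂ ≤ j₁ := by
    obtain ⟨t, _, htj, hteq⟩ := Ssum_ivt ω (M - 1) j₁ 0 (Nat.zero_le j₁)
      (by rw [Ssum_zero]; omega) (by rw [hj₁M]; omega)
    exact le_trans (Nat.find_min' hex2 ⟨hteq, lt_of_le_of_lt htj hj₁n⟩) htj
  have hGoodIff : ∀ j, j < n →
      (((∀ a, a < j → Ssum ω a ≤ Ssum ω j - 1) ∧
        (∀ t, j ≤ t → t < n → Ssum ω t ≤ Ssum ω j + 1)) ↔ (j = j₁ ∨ j = j₂)) := by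
    intro j hj
    constructor
    · rintro ⟨hA, hB⟩
      have hjle : Ssum ω j ≤ M := ht₀max j hj
      have hMj : M ≤ Ssum ω j + 1 := by
        rcases Nat.lt_or_ge t₀ j with hlt | hge
        · have := hA t₀ hlt
          omega
        · have := hB t₀ hge ht₀n'
          omega
      rcases (by omega : Ssum ω j = M ∨ Ssum ω j = M - 1) with hSj | hSj
      · left
        have hle : j₁ ≤ j := Nat.find_min' hex1 ⟨hSj, hj⟩
        rcases eq_or_lt_of_le hle with he | hlt
        · exact he.symm
        · have := hA j₁ hlt
          rw [hj₁M] at this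
          omega
      · right
        have hle : j₂ ≤ j := Nat.find_min' hex2 ⟨hSj, hj⟩
        rcases eq_or_lt_of_le hle with he | hlt
        · exact he.symm
        · have := hA j₂ hlt
          rw [hj₂M] at this
          omega
    · rintro (rfl | rfl)
      · constructor
        · intro a ha
          have h1 : Ssum ω a ≤ M := ht₀max a (lt_trans ha hj₁n)
          have h2 : Ssum ω a ≠ M := by
            intro hc
            exact Nat.find_min hex1 ha ⟨hc, lt_trans ha hj₁n⟩
          rw [hj₁M]
          omega
        · intro t _ htn
          have := ht₀max t htn
          rw [hj₁M]
          omega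
      · constructor
        · intro a ha
          have h1 : Ssum ω a ≤ M := ht₀max a (lt_trans ha hj₂n)
          have h2 : Ssum ω a ≠ M - 1 := by
            intro hc
            exact Nat.find_min hex2 ha ⟨hc, lt_trans ha hj₂n⟩
          have h3 : Ssum ω a ≠ M := by
            intro hc
            exact Nat.find_min hex1 (lt_of_lt_of_le ha hj₂₁) ⟨hc, lt_trans ha hj₂n⟩
          rw [hj₂M]
          omega
        · intro t _ htn
          have := ht₀max t htn
          rw [hj₂M]
          omega
  have hset : {j : ℕ | j < ω.length ∧ ∃ p₁ p₂ : List Letter, IsCorrect p₁ ∧ IsCorrect p₂ ∧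
      ω.rotate j = p₁ ++ [Letter.b] ++ p₂ ++ [Letter.b]} = {j₁, j₂} := by
    ext j
    simp only [Set.mem_setOf_eq, Set.mem_insert_iff, Set.mem_singleton_iff]
    constructor
    · rintro ⟨hjn, hdec⟩
      rw [← hn] at hjn
      have hcount : (ω.rotate j).count Letter.b = (ω.rotate j).count Letter.w + 2 := by
        rw [(List.rotate_perm ω j).count_eq, (List.rotate_perm ω j).count_eq]
        exact h
      exact (hGoodIff j hjn).mp ((rotate_prefix_iff ω h hjn).mp
        ((decomp_iff _ hcount).mp hdec))
    · intro hj
      have hjn : j < n := by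
        rcases hj with rfl | rfl
        · exact hj₁n
        · exact hj₂n
      have hcount : (ω.rotate j).count Letter.b = (ω.rotate j).count Letter.w + 2 := by
        rw [(List.rotate_perm ω j).count_eq, (List.rotate_perm ω j).count_eq]
        exact h
      exact ⟨by rw [← hn]; exact hjn, (decomp_iff _ hcount).mpr
        ((rotate_prefix_iff ω h hjn).mpr ((hGoodIff j hjn).mpr hj))⟩
  rw [hset]
  apply Set.ncard_pair
  intro hc
  rw [hc, hj₂M] at hj₁M
  omega
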